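/- Identify ℝ² ≅ ℂ and fix a ∈ ℝ. For every trigonometric polynomial loop γ(t) = Σ_{k∈F} e^{2πikt}·c_k (F ⊂ ℤ finite, c_k ∈ ℂ), the action S_a(γ) = ∫₀^1 ½|γ'(t)|² dt − (a/2)∫₀^1 Im(conj(γ(t))·γ'(t)) dt satisfies S_a(γ) = Σ_{k∈F} (2π²k² − aπk)·|c_k|². Moreover, if a > 0 and a ∉ 2πℤ, and k₀ is the unique integer with 2πk₀ < a < 2π(k₀+1), then the number of integers k with 2π²k² − aπk < 0 equals k₀ (so the index of the quadratic form S_a, counting complex dimensions as 2 real dimensions, is 2k₀). -/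

import Mathlib

open Real Complex

noncomputable section

/-- The trigonometric polynomial loop `γ(t) = Σ_{k ∈ F} e^{2πikt}·c_k` in ℂ ≅ ℝ². -/
def trigLoop (F : Finset ℤ) (c : ℤ → ℂ) : ℝ → ℂ :=
  fun t => ∑ k ∈ F, Complex.exp (2 * (π : ℂ) * Complex.I * (k : ℂ) * (t : ℂ)) * c k

/-- The Lagrangian action of the constant magnetic field `a` on a contractible loop
`γ : ℝ → ℂ` of period 1: `∫₀¹ ½|γ'|² dt − (a/2)∫₀¹ Im(conj(γ)·γ') dt`. -/
def magAction (a : ℝ) (γ : ℝ → ℂ) : ℝ :=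
  (∫ t in (0:ℝ)..1, (1:ℝ)/2 * ‖deriv γ t‖ ^ 2) -
  (a / 2) * ∫ t in (0:ℝ)..1, ((starRingEnd ℂ) (γ t) * deriv γ t).im

/-!
The modes `exp (2πikt)` are orthonormal in `L²(0,1)` and differentiation multiplies the `k`-th
coefficient by `2πik`, so both terms of the action are diagonal in the Fourier coefficients: the
kinetic term contributes `2π²k²|c_k|²` and the area term `πk|c_k|²` per unit of `a`. The
coefficient `πk(2πk - a)` is negative exactly when `0 < k < a/(2π)`, i.e. for `k = 1, …, k₀`.
-/

open ComplexConjugate MeasureTheory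

lemma integral_exp_two_pi_I_int_mul (n : ℤ) :
    ∫ t in (0:ℝ)..1, Complex.exp (2 * π * I * n * t) = if n = 0 then 1 else 0 := by
  split_ifs with hn
  · simp [hn]
  · have hc : 2 * π * I * n ≠ 0 := by simp [Real.pi_ne_zero, hn]
    rw [integral_exp_mul_complex hc, show 2 * π * I * n = n * (2 * π * I) by ring]
    simp [Complex.exp_int_mul_two_pi_mul_I]

lemma conj_exp_mul_exp (k l : ℤ) (t : ℝ) :
    conj (Complex.exp (2 * π * I * k * t)) * Complex.exp (2 * π * I * l * t) =
      Complex.exp (2 * π * I * (l - k : ℤ) * t) := by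
  rw [← Complex.exp_conj, ← Complex.exp_add]
  congr 1
  simp only [map_mul, Complex.conj_I, Complex.conj_ofReal, map_ofNat, map_intCast]
  push_cast
  ring

lemma integral_conj_exp_mul_exp (k l : ℤ) :
    ∫ t in (0:ℝ)..1, conj (Complex.exp (2 * π * I * k * t)) * Complex.exp (2 * π * I * l * t) =
      if k = l then 1 else 0 := by
  simp_rw [conj_exp_mul_exp, integral_exp_two_pi_I_int_mul, sub_eq_zero, eq_comm]

lemma continuous_trigLoop (F : Finset ℤ) (c : ℤ → ℂ) : Continuous (trigLoop F c) := by
  unfold trigLoop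
  fun_prop

lemma integral_conj_trigLoop_mul_trigLoop (F : Finset ℤ) (u v : ℤ → ℂ) :
    ∫ t in (0:ℝ)..1, conj (trigLoop F u t) * trigLoop F v t = ∑ k ∈ F, conj (u k) * v k := by
  have hmode : ∀ k l : ℤ, Continuous fun t : ℝ =>
      conj (Complex.exp (2 * π * I * k * t) * u k) * (Complex.exp (2 * π * I * l * t) * v l) := by
    intro k l
    fun_prop
  simp_rw [trigLoop, map_sum, Finset.sum_mul_sum]
  rw [intervalIntegral.integral_finsetSum fun k _ =>
    (continuous_finsetSum _ fun l _ => hmode k l).intervalIntegrable _ _]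
  refine Finset.sum_congr rfl fun k hk => ?_
  rw [intervalIntegral.integral_finsetSum fun l _ => (hmode k l).intervalIntegrable _ _]
  have hterm : ∀ l : ℤ, ∫ t in (0:ℝ)..1,
      conj (Complex.exp (2 * π * I * k * t) * u k) * (Complex.exp (2 * π * I * l * t) * v l) =
        if k = l then conj (u k) * v k else 0 := by
    intro l
    simp_rw [map_mul, mul_mul_mul_comm, intervalIntegral.integral_mul_const,
      integral_conj_exp_mul_exp]
    split_ifs with h <;> simp [h]
  simp_rw [hterm, Finset.sum_ite_eq, hk, if_true]

lemma integral_norm_trigLoop_sq (F : Finset ℤ) (u : ℤ → ℂ) :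
    ∫ t in (0:ℝ)..1, ‖trigLoop F u t‖ ^ 2 = ∑ k ∈ F, ‖u k‖ ^ 2 := by
  apply Complex.ofReal_injective
  push_cast
  rw [← intervalIntegral.integral_ofReal]
  push_cast
  simp_rw [← Complex.conj_mul']
  exact integral_conj_trigLoop_mul_trigLoop F u u

lemma integral_im_conj_trigLoop_mul_trigLoop (F : Finset ℤ) (u v : ℤ → ℂ) :
    ∫ t in (0:ℝ)..1, (conj (trigLoop F u t) * trigLoop F v t).im =
      (∑ k ∈ F, conj (u k) * v k).im := by
  have hint : IntervalIntegrable (fun t => conj (trigLoop F u t) * trigLoop F v t) volume 0 1 :=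
    ((Complex.continuous_conj.comp (continuous_trigLoop F u)).mul
      (continuous_trigLoop F v)).intervalIntegrable _ _
  rw [← integral_conj_trigLoop_mul_trigLoop]
  exact ContinuousLinearMap.intervalIntegral_comp_comm Complex.imCLM hint

lemma hasDerivAt_trigLoop (F : Finset ℤ) (c : ℤ → ℂ) (t : ℝ) :
    HasDerivAt (trigLoop F c) (trigLoop F (fun k => 2 * π * I * k * c k) t) t := by
  unfold trigLoop
  refine HasDerivAt.fun_sum fun k _ => ?_
  have hlin : HasDerivAt (fun t : ℝ => 2 * π * I * k * (t : ℂ)) (2 * π * I * k) t := by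
    simpa using (Complex.ofRealCLM.hasDerivAt (x := t)).const_mul (2 * π * I * (k : ℂ))
  exact (hlin.cexp.mul_const (c k)).congr_deriv (by ring)

lemma deriv_trigLoop (F : Finset ℤ) (c : ℤ → ℂ) :
    deriv (trigLoop F c) = trigLoop F (fun k => 2 * π * I * k * c k) :=
  funext fun t => (hasDerivAt_trigLoop F c t).deriv

lemma magAction_trigLoop (a : ℝ) (F : Finset ℤ) (c : ℤ → ℂ) :
    magAction a (trigLoop F c) =
      ∑ k ∈ F, (2 * π ^ 2 * (k : ℝ) ^ 2 - a * π * (k : ℝ)) * ‖c k‖ ^ 2 := by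
  have hkinetic : ∀ k : ℤ, ‖2 * π * I * k * c k‖ ^ 2 = 4 * π ^ 2 * (k : ℝ) ^ 2 * ‖c k‖ ^ 2 := by
    intro k
    simp only [norm_mul, Complex.norm_I, Complex.norm_real, Complex.norm_intCast,
      Complex.norm_ofNat, Real.norm_eq_abs, mul_pow, _root_.sq_abs]
    ring
  have harea : ∀ k : ℤ, (conj (c k) * (2 * π * I * k * c k)).im = 2 * π * k * ‖c k‖ ^ 2 := by
    intro k
    rw [show conj (c k) * (2 * π * I * k * c k) = ((2 * π * k * ‖c k‖ ^ 2 : ℝ) : ℂ) * I by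
      rw [mul_left_comm, Complex.conj_mul']; push_cast; ring, Complex.mul_I_im, Complex.ofReal_re]
  rw [magAction, deriv_trigLoop, intervalIntegral.integral_const_mul, integral_norm_trigLoop_sq,
    integral_im_conj_trigLoop_mul_trigLoop, Complex.im_sum, Finset.mul_sum, Finset.mul_sum,
    ← Finset.sum_sub_distrib]
  refine Finset.sum_congr rfl fun k _ => ?_
  rw [hkinetic, harea]
  ring

lemma quadForm_neg_iff {a : ℝ} (ha : 0 < a) (k : ℤ) :
    2 * π ^ 2 * (k : ℝ) ^ 2 - a * π * k < 0 ↔ 0 < k ∧ 2 * π * k < a := by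
  rw [show 2 * π ^ 2 * (k : ℝ) ^ 2 - a * π * k = (π * k) * (2 * π * k - a) by ring, mul_neg_iff]
  constructor
  · rintro (⟨hk, hka⟩ | ⟨hk, hka⟩)
    · exact ⟨by exact_mod_cast pos_of_mul_pos_right hk pi_pos.le, by linarith⟩
    · nlinarith
  · rintro ⟨hk, hka⟩
    exact Or.inl ⟨mul_pos pi_pos (by exact_mod_cast hk), by linarith⟩

lemma setOf_quadForm_neg_eq_Icc {a : ℝ} (ha : 0 < a) {k₀ : ℤ}
    (h₀ : 2 * π * k₀ < a) (h₁ : a < 2 * π * (k₀ + 1)) :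
    {k : ℤ | 2 * π ^ 2 * (k : ℝ) ^ 2 - a * π * k < 0} = Set.Icc 1 k₀ := by
  ext k
  rw [Set.mem_ofPred_eq, quadForm_neg_iff ha, Set.mem_Icc]
  refine ⟨fun ⟨hk, hka⟩ => ⟨hk, ?_⟩, fun ⟨hk, hkk₀⟩ => ⟨hk, ?_⟩⟩
  · have : (k : ℝ) < k₀ + 1 := lt_of_mul_lt_mul_left (hka.trans h₁) (by positivity)
    exact Int.lt_add_one_iff.mp (by exact_mod_cast this)
  · calc 2 * π * k ≤ 2 * π * k₀ := by gcongr
      _ < a := h₀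

theorem fourier_action_and_index (a : ℝ) :
    (∀ (F : Finset ℤ) (c : ℤ → ℂ),
      magAction a (trigLoop F c) =
        ∑ k ∈ F, (2 * π ^ 2 * (k : ℝ) ^ 2 - a * π * (k : ℝ)) * ‖c k‖ ^ 2) ∧
    (0 < a → (∀ m : ℤ, a ≠ 2 * π * m) → ∀ k₀ : ℤ,
      2 * π * k₀ < a → a < 2 * π * (k₀ + 1) →
      (({k : ℤ | 2 * π ^ 2 * (k : ℝ) ^ 2 - a * π * (k : ℝ) < 0}.ncard : ℤ) = k₀)) := by
  refine ⟨magAction_trigLoop a, fun ha _ k₀ h₀ h₁ => ?_⟩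
  have hk₀ : 0 < k₀ + 1 := by
    exact_mod_cast (pos_of_mul_pos_right (ha.trans h₁) (by positivity) : (0 : ℝ) < k₀ + 1)
  rw [setOf_quadForm_neg_eq_Icc ha h₀ h₁, ← Finset.coe_Icc, Set.ncard_coe_finset, Int.card_Icc]
  omega
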